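/- arXiv:1908.03172 — 5 statements merged into one kernel-verified Lean document; each statement's English description precedes it below -/
import Mathlib

section
/- Let G be a finite simple graph, let x and y be adjacent vertices of G with deg(x) ≤ 4 and deg(y) ≤ 4, and suppose that the graph G − xy obtained from G by deleting the edge xy is (3,4)-colorable. Then G is (3,4)-colorable. -/
/-- The degree of a vertex: the number of its neighbors. -/
noncomputable def degN {V : Type*} (G : SimpleGraph V) (v : V) : ℕ :=
  {w | G.Adj v w}.ncard

/-- `c` is a (3,4)-coloring of `G`: every vertex gets value 3 or 4, and every
vertex with value `i` has at most `i` neighbors with value `i`. -/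
def IsColoring34 {V : Type*} (G : SimpleGraph V) (c : V → ℕ) : Prop :=
  (∀ v, c v = 3 ∨ c v = 4) ∧ ∀ v, {w | G.Adj v w ∧ c w = c v}.ncard ≤ c v

/-- `G` is (3,4)-colorable. -/
def Colorable34 {V : Type*} (G : SimpleGraph V) : Prop :=
  ∃ c, IsColoring34 G c

/-- The graph `G − v` obtained by deleting the vertex `v` and its incident edges
(keeping `v` as an isolated vertex, which does not affect (3,4)-colorability). -/
def deleteVert {V : Type*} (G : SimpleGraph V) (v : V) : SimpleGraph V where
  Adj a b := G.Adj a b ∧ a ≠ v ∧ b ≠ v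
  symm := ⟨fun _ _ ⟨h, ha, hb⟩ => ⟨h.symm, hb, ha⟩⟩
  loopless := ⟨fun a ⟨h, _, _⟩ => G.loopless.irrefl a h⟩

/-- `G` is minimally non-(3,4)-colorable. -/
def MinNonColorable34 {V : Type*} (G : SimpleGraph V) : Prop :=
  ¬ Colorable34 G ∧ (∀ v, Colorable34 (deleteVert G v)) ∧
    ∀ e ∈ G.edgeSet, Colorable34 (G.deleteEdges {e})

/-- `u` is `i`-saturated under the coloring `c` of the graph `G`. -/
def Saturated34 {V : Type*} (G : SimpleGraph V) (c : V → ℕ) (i : ℕ) (u : V) : Prop :=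
  c u = i ∧ {w | G.Adj u w ∧ c w = i}.ncard = i

/-- `u` can be recolored: changing the color of `u` to the other color
(`7 - c u` swaps 3 and 4) again yields a (3,4)-coloring of `G`. -/
def Recolorable34 {V : Type*} [DecidableEq V] (G : SimpleGraph V) (c : V → ℕ) (u : V) : Prop :=
  IsColoring34 G (Function.update c u (7 - c u))

/-- The number of 3^+-neighbors of `x` in `G` (neighbors of degree at least 3). -/
noncomputable def tpn {V : Type*} (G : SimpleGraph V) (x : V) : ℕ :=
  {w | G.Adj x w ∧ 3 ≤ degN G w}.ncard

/-- A 5p-vertex (poor 5-vertex): degree 5 with exactly one 3^+-neighbor. -/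
def Is5p {V : Type*} (G : SimpleGraph V) (x : V) : Prop := degN G x = 5 ∧ tpn G x = 1

/-- A 5s-vertex (semi-poor 5-vertex): degree 5 with exactly two 3^+-neighbors. -/
def Is5s {V : Type*} (G : SimpleGraph V) (x : V) : Prop := degN G x = 5 ∧ tpn G x = 2

/-- A 6p-vertex (poor 6-vertex): degree 6 with exactly one 3^+-neighbor. -/
def Is6p {V : Type*} (G : SimpleGraph V) (x : V) : Prop := degN G x = 6 ∧ tpn G x = 1

/-- `G` has girth at least 5: no 3-cycles and no 4-cycles. -/
def GirthAtLeast5 {V : Type*} (G : SimpleGraph V) : Prop :=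
  (∀ a b c : V, G.Adj a b → G.Adj b c → ¬ G.Adj c a) ∧
  (∀ a b c d : V, a ≠ c → b ≠ d →
    G.Adj a b → G.Adj b c → G.Adj c d → ¬ G.Adj d a)

/-! A coloring `c` of `G − xy` can only fail on `G` at `x` or `y`, and only when
`c x = c y` and the edge `xy` pushes, say, `x` over its bound. Since `deg x ≤ 4`, all
neighbors of `x` then share its color, and that color cannot be 4, so it is 3. Recoloring
`x` with 4 leaves it without 4-colored neighbors and takes it out of the 3-colored
neighborhoods of all its neighbors. -/

section

variable {V : Type*} {G : SimpleGraph V}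

lemma ncard_setOf_adj_and_le_degN [Finite V] (v : V) (P : V → Prop) :
    {w | G.Adj v w ∧ P w}.ncard ≤ degN G v :=
  Set.ncard_le_ncard (fun _ hw => hw.1) (Set.toFinite _)

lemma forall_adj_of_degN_le_ncard [Finite V] {v : V} {P : V → Prop}
    (h : degN G v ≤ {w | G.Adj v w ∧ P w}.ncard) : ∀ w, G.Adj v w → P w := by
  have heq : {w | G.Adj v w ∧ P w} = {w | G.Adj v w} :=
    Set.eq_of_subset_of_ncard_le (fun _ hw => hw.1) h (Set.toFinite _)
  intro w hw
  exact (heq.symm ▸ hw : w ∈ {w | G.Adj v w ∧ P w}).2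

variable [Finite V] {c : V → ℕ} {x y : V}

lemma IsColoring34.of_deleteEdges_singleton (hc : IsColoring34 (G.deleteEdges {s(x, y)}) c)
    (hx : {w | G.Adj x w ∧ c w = c x}.ncard ≤ c x)
    (hy : {w | G.Adj y w ∧ c w = c y}.ncard ≤ c y) :
    IsColoring34 G c := by
  refine ⟨hc.1, fun v => ?_⟩
  by_cases hvx : v = x
  · exact hvx ▸ hx
  by_cases hvy : v = y
  · exact hvy ▸ hy
  have hsub : {w | G.Adj v w ∧ c w = c v}
      ⊆ {w | (G.deleteEdges {s(x, y)}).Adj v w ∧ c w = c v} := by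
    refine fun w ⟨hvw, hcw⟩ =>
      ⟨(G.deleteEdges_adj ..).2 ⟨hvw, fun he => ?_⟩, hcw⟩
    have hv : v ∈ s(x, y) := Set.mem_singleton_iff.1 he ▸ Sym2.mem_mk_left v w
    rcases Sym2.mem_iff.1 hv with rfl | rfl <;> contradiction
  exact (Set.ncard_le_ncard hsub (Set.toFinite _)).trans (hc.2 v)

lemma IsColoring34.update_four_of_forall_adj_eq_three [DecidableEq V]
    (hc : IsColoring34 (G.deleteEdges {s(x, y)}) c) (hnbr : ∀ w, G.Adj x w → c w = 3) :
    IsColoring34 G (Function.update c x 4) := by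
  refine ⟨fun v => ?_, fun v => ?_⟩
  · rcases eq_or_ne v x with rfl | hvx
    · simp
    · simpa [Function.update_of_ne hvx] using hc.1 v
  rcases eq_or_ne v x with rfl | hvx
  · have hempty : {w | G.Adj v w ∧ Function.update c v 4 w = Function.update c v 4 v} = ∅ := by
      refine Set.eq_empty_of_forall_notMem fun w ⟨hvw, hcw⟩ => ?_
      rw [Function.update_self, Function.update_of_ne hvw.ne.symm, hnbr w hvw] at hcw
      omega
    rw [hempty, Set.ncard_empty]
    exact Nat.zero_le _
  rw [Function.update_of_ne hvx]
  have hsub : {w | G.Adj v w ∧ Function.update c x 4 w = c v}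
      ⊆ {w | (G.deleteEdges {s(x, y)}).Adj v w ∧ c w = c v} := by
    rintro w ⟨hvw, hcw⟩
    have hwx : w ≠ x := by
      rintro rfl
      rw [Function.update_self, hnbr v hvw.symm] at hcw
      omega
    rw [Function.update_of_ne hwx] at hcw
    refine ⟨(G.deleteEdges_adj ..).2 ⟨hvw, fun he => ?_⟩, hcw⟩
    have hx : x ∈ s(v, w) := Set.mem_singleton_iff.1 he ▸ Sym2.mem_mk_left x y
    rcases Sym2.mem_iff.1 hx with rfl | rfl <;> contradiction
  exact (Set.ncard_le_ncard hsub (Set.toFinite _)).trans (hc.2 v)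

lemma colorable34_of_deleteEdges_of_lt_ncard (hc : IsColoring34 (G.deleteEdges {s(x, y)}) c)
    (hx : degN G x ≤ 4) (hlt : c x < {w | G.Adj x w ∧ c w = c x}.ncard) :
    Colorable34 G := by
  classical
  have hnbr : ∀ w, G.Adj x w → c w = c x :=
    forall_adj_of_degN_le_ncard (by rcases hc.1 x with h | h <;> omega)
  have hcx : c x = 3 := by
    have := ncard_setOf_adj_and_le_degN (G := G) x (c · = c x)
    rcases hc.1 x with h | h <;> omega
  exact ⟨_, hc.update_four_of_forall_adj_eq_three fun w hw => hcx ▸ hnbr w hw⟩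

end

theorem stmt_0_general {V : Type*} [Fintype V] (G : SimpleGraph V) (x y : V)
    (hx : degN G x ≤ 4) (hy : degN G y ≤ 4)
    (h : Colorable34 (G.deleteEdges {s(x, y)})) :
    Colorable34 G := by
  obtain ⟨c, hc⟩ := h
  by_cases hbx : {w | G.Adj x w ∧ c w = c x}.ncard ≤ c x
  · by_cases hby : {w | G.Adj y w ∧ c w = c y}.ncard ≤ c y
    · exact ⟨c, hc.of_deleteEdges_singleton hbx hby⟩
    · rw [Sym2.eq_swap] at hc
      exact colorable34_of_deleteEdges_of_lt_ncard hc hy (not_le.1 hby)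
  · exact colorable34_of_deleteEdges_of_lt_ncard hc hx (not_le.1 hbx)

/-- If `x, y` are adjacent vertices of a finite simple graph `G`, both of
degree at most 4, and `G − xy` is (3,4)-colorable, then `G` is (3,4)-colorable. -/
theorem stmt_0 {V : Type*} [Fintype V] (G : SimpleGraph V) (x y : V)
    (hadj : G.Adj x y) (hx : degN G x ≤ 4) (hy : degN G y ≤ 4)
    (h : Colorable34 (G.deleteEdges {s(x, y)})) :
    Colorable34 G :=
  stmt_0_general G x y hx hy h
end

section
/- Let G be a finite simple graph and let v be a vertex of G of degree 3 with neighbors v1, v2, v3. Let H be the graph obtained from G − v by adding three new vertices u1, u2, u3 and the six edges v1u1, u1v2, v2u2, u2v3, v3u3, u3v1. If H is (3,4)-colorable, then G is (3,4)-colorable. -/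
/-- The graph `H` obtained from `G − v` by adding three new vertices `u₁, u₂, u₃`
and the six edges `v₁u₁, u₁v₂, v₂u₂, u₂v₃, v₃u₃, u₃v₁`. -/
def augGraph {V : Type*} (G : SimpleGraph V) (v v1 v2 v3 : V) :
    SimpleGraph (V ⊕ Fin 3) :=
  SimpleGraph.fromRel fun a b =>
    match a, b with
    | Sum.inl x, Sum.inl y => G.Adj x y ∧ x ≠ v ∧ y ≠ v
    | Sum.inr i, Sum.inl x =>
        (i = 0 ∧ (x = v1 ∨ x = v2)) ∨ (i = 1 ∧ (x = v2 ∨ x = v3)) ∨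
          (i = 2 ∧ (x = v3 ∨ x = v1))
    | _, _ => False

/-!
Color `v` with a color shared by two of `u₁, u₂, u₃`, which exists since there are three of them
and only two colors. Any two of the paths `v₁u₁v₂, v₂u₂v₃, v₃u₃v₁` together pass through every
`vᵢ`, so each neighbor of `v` trades a neighbor `uⱼ` of that color in `H` for `v` in `G`. Hence no
vertex other than `v` gains same-colored neighbors, and `v` has only three neighbors.
-/

section
variable {V : Type*} {G : SimpleGraph V} {v v1 v2 v3 : V}

@[simp]
theorem augGraph_adj_inl_inl {x y : V} :
    (augGraph G v v1 v2 v3).Adj (.inl x) (.inl y) ↔ G.Adj x y ∧ x ≠ v ∧ y ≠ v := by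
  simp only [augGraph, SimpleGraph.fromRel_adj]
  constructor
  · rintro ⟨-, h | ⟨h, hy, hx⟩⟩
    exacts [h, ⟨h.symm, hx, hy⟩]
  · rintro h
    exact ⟨by simp [h.1.ne], .inl h⟩

@[simp]
theorem augGraph_adj_inl_inr {x : V} {i : Fin 3} :
    (augGraph G v v1 v2 v3).Adj (.inl x) (.inr i) ↔
      (i = 0 ∧ (x = v1 ∨ x = v2)) ∨ (i = 1 ∧ (x = v2 ∨ x = v3)) ∨
        (i = 2 ∧ (x = v3 ∨ x = v1)) := by
  simp [augGraph, SimpleGraph.fromRel_adj]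

theorem setOf_adj_eq_of_degN_eq_three (hdeg : degN G v = 3) (h1 : G.Adj v v1)
    (h2 : G.Adj v v2) (h3 : G.Adj v v3) (h12 : v1 ≠ v2) (h13 : v1 ≠ v3) (h23 : v2 ≠ v3) :
    {w | G.Adj v w} = {v1, v2, v3} := by
  have hcard : ({v1, v2, v3} : Set V).ncard = 3 :=
    Set.ncard_eq_three.mpr ⟨v1, v2, v3, h12, h13, h23, rfl⟩
  refine (Set.eq_of_subset_of_ncard_le ?_ (hdeg.trans hcard.symm).le ?_).symm
  · rintro w (rfl | rfl | rfl) <;> assumption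
  · exact Set.finite_of_ncard_ne_zero (by unfold degN at hdeg; omega)

theorem augGraph_adj_inr_or_adj_inr {x : V} {j k : Fin 3} (hjk : j ≠ k)
    (hx : x = v1 ∨ x = v2 ∨ x = v3) :
    (augGraph G v v1 v2 v3).Adj (.inl x) (.inr j) ∨
      (augGraph G v v1 v2 v3).Adj (.inl x) (.inr k) := by
  simp only [augGraph_adj_inl_inr]
  fin_cases j <;> fin_cases k <;> simp_all <;> tauto

theorem IsColoring34.exists_color_adj_inr {c : V ⊕ Fin 3 → ℕ}
    (hc : IsColoring34 (augGraph G v v1 v2 v3) c) :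
    ∃ a, (a = 3 ∨ a = 4) ∧ ∀ x, (x = v1 ∨ x = v2 ∨ x = v3) →
      ∃ i, (augGraph G v v1 v2 v3).Adj (.inl x) (.inr i) ∧ c (.inr i) = a := by
  obtain ⟨j, k, hjk, hcjk⟩ : ∃ j k : Fin 3, j ≠ k ∧ c (.inr j) = c (.inr k) := by
    have h0 := hc.1 (.inr 0)
    have h1 := hc.1 (.inr 1)
    have h2 := hc.1 (.inr 2)
    by_cases h01 : c (.inr 0) = c (.inr 1)
    · exact ⟨0, 1, by decide, h01⟩
    by_cases h02 : c (.inr 0) = c (.inr 2)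
    · exact ⟨0, 2, by decide, h02⟩
    exact ⟨1, 2, by decide, by omega⟩
  refine ⟨c (.inr j), hc.1 _, fun x hx => ?_⟩
  rcases augGraph_adj_inr_or_adj_inr hjk hx with h | h
  exacts [⟨j, h, rfl⟩, ⟨k, h, hcjk.symm⟩]

theorem IsColoring34.update_augGraph [Finite V] [DecidableEq V] {c : V ⊕ Fin 3 → ℕ} {a : ℕ}
    (hc : IsColoring34 (augGraph G v v1 v2 v3) c) (ha : a = 3 ∨ a = 4)
    (hdeg : degN G v ≤ 3)
    (hnbr : ∀ x, G.Adj v x →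
      ∃ i, (augGraph G v v1 v2 v3).Adj (.inl x) (.inr i) ∧ c (.inr i) = a) :
    IsColoring34 G (Function.update (c ∘ Sum.inl) v a) := by
  refine ⟨fun x => ?_, fun x => ?_⟩
  · rcases eq_or_ne x v with rfl | hx
    · simpa using ha
    · simpa [hx] using hc.1 (.inl x)
  rcases eq_or_ne x v with rfl | hx
  · calc _ ≤ degN G x := Set.ncard_le_ncard (fun w hw => hw.1)
      _ ≤ 3 := hdeg
      _ ≤ _ := by simp only [Function.update_self]; omega
  obtain ⟨i, hi⟩ : ∃ i, G.Adj x v →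
      (augGraph G v v1 v2 v3).Adj (.inl x) (.inr i) ∧ c (.inr i) = a := by
    by_cases hxv : G.Adj x v
    · obtain ⟨i, hi⟩ := hnbr x hxv.symm
      exact ⟨i, fun _ => hi⟩
    · exact ⟨0, fun h => absurd h hxv⟩
  have hinj : (Function.update Sum.inl v (.inr i) : V → V ⊕ Fin 3).Injective := by
    intro w₁ w₂
    rcases eq_or_ne w₁ v with h₁ | h₁ <;> rcases eq_or_ne w₂ v with h₂ | h₂ <;>
      simp [*]
  have hmaps : ∀ w ∈ {w | G.Adj x w ∧ Function.update (c ∘ Sum.inl) v a w = c (.inl x)},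
      Function.update Sum.inl v (.inr i) w ∈
        {y | (augGraph G v v1 v2 v3).Adj (.inl x) y ∧ c y = c (.inl x)} := by
    rintro w ⟨hxw, hcw⟩
    rcases eq_or_ne w v with rfl | hw <;> simp_all
  simpa [hx] using (Set.ncard_le_ncard_of_injOn _ hmaps hinj.injOn).trans (hc.2 (.inl x))
end

/-- If `v` is a 3-vertex of `G` with neighbors `v₁, v₂, v₃`, and the
graph `H` obtained from `G − v` by adding paths `v₁u₁v₂, v₂u₂v₃, v₃u₃v₁` of length
two is (3,4)-colorable, then `G` is (3,4)-colorable. -/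
theorem stmt_2 {V : Type*} [Fintype V] (G : SimpleGraph V) (v v1 v2 v3 : V)
    (hdeg : degN G v = 3)
    (h1 : G.Adj v v1) (h2 : G.Adj v v2) (h3 : G.Adj v v3)
    (h12 : v1 ≠ v2) (h13 : v1 ≠ v3) (h23 : v2 ≠ v3)
    (hH : Colorable34 (augGraph G v v1 v2 v3)) :
    Colorable34 G := by
  classical
  obtain ⟨c, hc⟩ := hH
  obtain ⟨a, ha, hcover⟩ := hc.exists_color_adj_inr
  have hnbr := setOf_adj_eq_of_degN_eq_three hdeg h1 h2 h3 h12 h13 h23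
  refine ⟨_, hc.update_augGraph ha hdeg.le fun x hx => hcover x ?_⟩
  simpa [hnbr] using (show x ∈ {w | G.Adj v w} from hx)
end

section
/- Let G be a finite simple graph that is not (3,4)-colorable, let v be a vertex of G with deg(v) = 2, and let c be a (3,4)-coloring of G − v. Then for each i ∈ {3,4}, v has a neighbor u in G such that u is i-saturated under c, u cannot be recolored, and deg_G(u) ≥ i + 2; moreover, if deg_G(u) ≤ 8, then u has a neighbor w in G − v such that w is j-saturated under c and deg_G(w) ≥ j + 2, where {i, j} = {3, 4}. -/
section

variable {V : Type*}

lemma deleteVert_le (G : SimpleGraph V) (v : V) : deleteVert G v ≤ G := fun _ _ h => h.1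

open Classical in
noncomputable def recolorSaturatedNbrs (H : SimpleGraph V) (c : V → ℕ) (u : V) (i : ℕ) :
    V → ℕ :=
  fun w => if w = u then 7 - i else if H.Adj u w ∧ Saturated34 H c (7 - i) w then i else c w

section recolorSaturatedNbrs

variable {H : SimpleGraph V} {c : V → ℕ} {u w : V} {i : ℕ}

lemma recolorSaturatedNbrs_self : recolorSaturatedNbrs H c u i u = 7 - i := by
  simp [recolorSaturatedNbrs]

lemma recolorSaturatedNbrs_of_saturated (huw : H.Adj u w) (hw : Saturated34 H c (7 - i) w) :
    recolorSaturatedNbrs H c u i w = i := by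
  simp [recolorSaturatedNbrs, huw, hw, huw.ne']

lemma recolorSaturatedNbrs_of_not_saturated (hwu : w ≠ u)
    (hw : ¬ (H.Adj u w ∧ Saturated34 H c (7 - i) w)) : recolorSaturatedNbrs H c u i w = c w := by
  simp only [recolorSaturatedNbrs, if_neg hwu, if_neg hw]

lemma recolorSaturatedNbrs_eq_of_ne (hwu : w ≠ u) (hw : recolorSaturatedNbrs H c u i w ≠ i) :
    recolorSaturatedNbrs H c u i w = c w :=
  recolorSaturatedNbrs_of_not_saturated hwu fun h => hw (recolorSaturatedNbrs_of_saturated h.1 h.2)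

end recolorSaturatedNbrs

variable [Finite V]

lemma ncard_le_of_subset_insert {s t : Set V} {a : V} {k : ℕ} (hst : s ⊆ insert a t)
    (ht : t.ncard ≤ k) (ha : a ∈ s → t.ncard < k) : s.ncard ≤ k := by
  by_cases has : a ∈ s
  · linarith [Set.ncard_le_ncard hst, Set.ncard_insert_le a t, ha has]
  · exact (Set.ncard_le_ncard fun w hw => (hst hw).resolve_left fun h => has (h ▸ hw)).trans ht

lemma degN_deleteVert_add_one {G : SimpleGraph V} {u v : V} (h : G.Adj u v) :
    degN (deleteVert G v) u + 1 = degN G u := by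
  have hN : {w | G.Adj u w} = insert v {w | (deleteVert G v).Adj u w} := by
    ext w
    rcases eq_or_ne w v with rfl | hw
    · simp [h]
    · simp [deleteVert, hw, h.ne]
  rw [degN, degN, hN, Set.ncard_insert_of_notMem (by simp [deleteVert])]

lemma degN_eq_ncard_add_ncard {H : SimpleGraph V} {c : V → ℕ} (hc : IsColoring34 H c) {i : ℕ}
    (hi : i = 3 ∨ i = 4) (x : V) :
    degN H x = {w | H.Adj x w ∧ c w = i}.ncard + {w | H.Adj x w ∧ c w = 7 - i}.ncard := by
  have hN : {w | H.Adj x w} = {w | H.Adj x w ∧ c w = i} ∪ {w | H.Adj x w ∧ c w = 7 - i} := by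
    ext w
    rcases hc.1 w with h | h <;> rcases hi with rfl | rfl <;> simp [h]
  rw [degN, hN, Set.ncard_union_eq (Set.disjoint_left.2 fun w h1 h2 => by
    have := h1.2; have := h2.2; omega)]

lemma adj_eq_or_eq_of_degN_eq_two {G : SimpleGraph V} {v u u' x : V} (hv : degN G v = 2)
    (hu : G.Adj v u) (hu' : G.Adj v u') (huu' : u ≠ u') (hx : G.Adj v x) : x = u ∨ x = u' := by
  by_contra! h
  have h3 : ({x, u, u'} : Set V).ncard = 3 :=
    Set.ncard_eq_three.2 ⟨x, u, u', h.1, h.2, huu', rfl⟩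
  have hsub : ({x, u, u'} : Set V) ⊆ {w | G.Adj v w} := by
    simp [Set.insert_subset_iff, hx, hu, hu']
  have := Set.ncard_le_ncard hsub
  rw [degN] at hv
  omega

lemma isColoring34_update_of_not_saturated [DecidableEq V] {G : SimpleGraph V} {v : V}
    {c : V → ℕ} (hc : IsColoring34 (deleteVert G v) c) {i : ℕ} (hi : i = 3 ∨ i = 4)
    (hv : degN G v ≤ i) (hsat : ∀ u, G.Adj v u → ¬ Saturated34 (deleteVert G v) c i u) :
    IsColoring34 G (Function.update c v i) := by
  refine ⟨fun x => ?_, fun x => ?_⟩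
  · rcases eq_or_ne x v with rfl | hxv
    · simpa using hi
    · simpa [hxv] using hc.1 x
  rcases eq_or_ne x v with rfl | hxv
  · rw [Function.update_self]
    exact (Set.ncard_le_ncard fun w (hw : w ∈ {w | G.Adj x w ∧ _}) => hw.1).trans hv
  rw [Function.update_of_ne hxv]
  refine ncard_le_of_subset_insert (a := v) ?_ (hc.2 x) fun ⟨hxv', hvx⟩ => ?_
  · rintro w ⟨hxw, hw⟩
    rcases eq_or_ne w v with rfl | hwv
    · exact Set.mem_insert _ _
    · rw [Function.update_of_ne hwv] at hw
      exact Or.inr ⟨⟨hxw, hxv, hwv⟩, hw⟩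
  · rw [Function.update_self] at hvx
    subst hvx
    exact (hc.2 x).lt_of_ne fun h => hsat x hxv'.symm ⟨rfl, h⟩

lemma exists_adj_saturated34 {G : SimpleGraph V} (hG : ¬ Colorable34 G) {v : V} {c : V → ℕ}
    (hc : IsColoring34 (deleteVert G v) c) {i : ℕ} (hi : i = 3 ∨ i = 4) (hv : degN G v ≤ i) :
    ∃ u, G.Adj v u ∧ Saturated34 (deleteVert G v) c i u := by
  classical
  by_contra! h
  exact hG ⟨_, isColoring34_update_of_not_saturated hc hi hv h⟩

lemma recolorable34_of_forall_adj_ne [DecidableEq V] {H : SimpleGraph V} {c : V → ℕ}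
    (hc : IsColoring34 H c) {u : V} (h : ∀ w, H.Adj u w → c w ≠ 7 - c u) :
    Recolorable34 H c u := by
  refine ⟨fun x => ?_, fun x => ?_⟩
  · rcases eq_or_ne x u with rfl | hxu
    · rcases hc.1 x with h | h <;> simp [h]
    · simpa [hxu] using hc.1 x
  rcases eq_or_ne x u with rfl | hxu
  · have hempty : {w | H.Adj x w ∧ Function.update c x (7 - c x) w =
        Function.update c x (7 - c x) x} = ∅ := by
      refine Set.eq_empty_iff_forall_notMem.2 fun w ⟨hxw, hw⟩ => ?_
      rw [Function.update_of_ne hxw.ne', Function.update_self] at hw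
      exact h w hxw hw
    rw [hempty, Set.ncard_empty]
    exact Nat.zero_le _
  · rw [Function.update_of_ne hxu]
    refine le_trans (Set.ncard_le_ncard fun w (hw : w ∈ {w | H.Adj x w ∧ _}) => ?_) (hc.2 x)
    obtain ⟨hxw, hw⟩ := hw
    rcases eq_or_ne w u with rfl | hwu
    · rw [Function.update_self] at hw
      exact absurd hw.symm (h x hxw.symm)
    · rw [Function.update_of_ne hwu] at hw
      exact ⟨hxw, hw⟩

lemma adj_eq_or_of_saturated_of_degN_lt {G H : SimpleGraph V} (hHG : H ≤ G) {c : V → ℕ}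
    {k : ℕ} {x u : V} (hx : Saturated34 H c k x) (hxu : G.Adj x u) (hcu : c u ≠ k)
    (hdeg : degN G x < k + 2) {w : V} (hw : G.Adj x w) : w = u ∨ (H.Adj x w ∧ c w = k) := by
  have hsub : insert u {w | H.Adj x w ∧ c w = k} ⊆ {w | G.Adj x w} := by
    rintro w (rfl | hw)
    exacts [hxu, hHG hw.1]
  have hcard : (insert u {w | H.Adj x w ∧ c w = k}).ncard = k + 1 := by
    rw [Set.ncard_insert_of_notMem fun h => hcu h.2, hx.2]
  rw [degN] at hdeg
  have hw' : w ∈ {w | G.Adj x w} := hw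
  rw [← Set.eq_of_subset_of_ncard_le hsub (by omega)] at hw'
  exact hw'

lemma ncard_recolorSaturatedNbrs_le {H : SimpleGraph V} {c : V → ℕ} {u x : V} {i : ℕ}
    (hi : 3 ≤ i) (hu : {w | H.Adj u w ∧ c w = 7 - i}.ncard ≤ 7 - i)
    (hS : ∀ w, H.Adj x w → w = u ∨ c w = 7 - i) (hux : H.Adj u x) (hx : c x = 7 - i) :
    {w | H.Adj x w ∧ recolorSaturatedNbrs H c u i w = i}.ncard ≤ i := by
  have hsub : {w | H.Adj x w ∧ recolorSaturatedNbrs H c u i w = i} ⊆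
      {w | H.Adj u w ∧ c w = 7 - i} \ {x} := by
    rintro w ⟨hxw, hdw⟩
    have hwu : w ≠ u := by rintro rfl; rw [recolorSaturatedNbrs_self] at hdw; omega
    have hcw : c w = 7 - i := (hS w hxw).resolve_left hwu
    have huw : H.Adj u w := by_contra fun huw => by
      rw [recolorSaturatedNbrs_of_not_saturated hwu fun h => huw h.1] at hdw
      omega
    exact ⟨⟨huw, hcw⟩, hxw.ne'⟩
  have := Set.ncard_le_ncard hsub
  have hx' : x ∈ {w | H.Adj u w ∧ c w = 7 - i} := ⟨hux, hx⟩
  rw [Set.ncard_sdiff_singleton_of_mem hx'] at this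
  omega

lemma isColoring34_recolorSaturatedNbrs {H : SimpleGraph V} {c : V → ℕ}
    (hc : IsColoring34 H c) {u : V} {i : ℕ} (hcu : c u = i)
    (hu : {w | H.Adj u w ∧ c w = 7 - i}.ncard ≤ 7 - i)
    (hS : ∀ x, H.Adj u x → Saturated34 H c (7 - i) x →
      ∀ w, H.Adj x w → w = u ∨ c w = 7 - i) :
    IsColoring34 H (recolorSaturatedNbrs H c u i) := by
  have hi : i = 3 ∨ i = 4 := hcu ▸ hc.1 u
  refine ⟨fun x => ?_, fun x => ?_⟩
  · rcases eq_or_ne x u with rfl | hxu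
    · rw [recolorSaturatedNbrs_self]; omega
    by_cases hx : H.Adj u x ∧ Saturated34 H c (7 - i) x
    · rw [recolorSaturatedNbrs_of_saturated hx.1 hx.2]; exact hi
    · rw [recolorSaturatedNbrs_of_not_saturated hxu hx]; exact hc.1 x
  rcases eq_or_ne x u with rfl | hxu
  · rw [recolorSaturatedNbrs_self]
    refine le_trans (Set.ncard_le_ncard fun w (hw : w ∈ {w | H.Adj x w ∧ _}) => ?_) hu
    have hdw : recolorSaturatedNbrs H c x i w = 7 - i := hw.2
    have hne : recolorSaturatedNbrs H c x i w ≠ i := by omega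
    exact ⟨hw.1, recolorSaturatedNbrs_eq_of_ne hw.1.ne' hne ▸ hdw⟩
  by_cases hx : H.Adj u x ∧ Saturated34 H c (7 - i) x
  · rw [recolorSaturatedNbrs_of_saturated hx.1 hx.2]
    exact ncard_recolorSaturatedNbrs_le (by omega) hu (hS x hx.1 hx.2) hx.1 hx.2.1
  rw [recolorSaturatedNbrs_of_not_saturated hxu hx]
  refine ncard_le_of_subset_insert (a := u) ?_ (hc.2 x) fun ⟨hxu', hux⟩ => ?_
  · rintro w ⟨hxw, hdw⟩
    rcases eq_or_ne w u with rfl | hwu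
    · exact Set.mem_insert _ _
    by_cases hw : H.Adj u w ∧ Saturated34 H c (7 - i) w
    · rw [recolorSaturatedNbrs_of_saturated hw.1 hw.2] at hdw
      have := (hS w hw.1 hw.2 x hxw.symm).resolve_left hxu
      omega
    · exact Or.inr ⟨hxw, recolorSaturatedNbrs_of_not_saturated hwu hw ▸ hdw⟩
  · rw [recolorSaturatedNbrs_self] at hux
    exact (hc.2 x).lt_of_ne fun h => hx ⟨hxu'.symm, hux.symm, hux ▸ h⟩

end

/-- If `G` is not (3,4)-colorable, `deg v = 2`, and `c` is a
(3,4)-coloring of `G − v`, then for each `i ∈ {3,4}`, `v` has an `i`-saturated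
neighbor `u` that cannot be recolored, with `deg_G u ≥ i + 2`; moreover if
`deg_G u ≤ 8`, then `u` has a `j`-saturated neighbor `w` in `G − v` with
`deg_G w ≥ j + 2`, where `{i, j} = {3, 4}` (i.e. `j = 7 - i`). -/
theorem stmt_4 {V : Type*} [Fintype V] [DecidableEq V] (G : SimpleGraph V) (v : V)
    (hG : ¬ Colorable34 G) (hv : degN G v = 2)
    (c : V → ℕ) (hc : IsColoring34 (deleteVert G v) c) :
    ∀ i : ℕ, (i = 3 ∨ i = 4) → ∃ u : V, G.Adj v u ∧
      Saturated34 (deleteVert G v) c i u ∧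
      ¬ Recolorable34 (deleteVert G v) c u ∧
      i + 2 ≤ degN G u ∧
      (degN G u ≤ 8 →
        ∃ w : V, (deleteVert G v).Adj u w ∧ Saturated34 (deleteVert G v) c (7 - i) w ∧
          (7 - i) + 2 ≤ degN G w) := by
  intro i hi
  obtain ⟨u, hvu, hu⟩ := exists_adj_saturated34 hG hc hi (by omega)
  obtain ⟨u', hvu', hu'⟩ := exists_adj_saturated34 hG hc (i := 7 - i) (by omega) (by omega)
  have huu' : u ≠ u' := fun h => by have := hu.1; have := hu'.1; subst h; omega
  have hblock :
      ∀ d, IsColoring34 (deleteVert G v) d → d u = 7 - i → d u' = 7 - i → False := by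
    intro d hd hdu hdu'
    obtain ⟨x, hvx, hdx, -⟩ := exists_adj_saturated34 hG hd hi (by omega)
    rcases adj_eq_or_eq_of_degN_eq_two hv hvu hvu' huu' hvx with rfl | rfl <;> omega
  have hNR : ¬ Recolorable34 (deleteVert G v) c u := fun hR =>
    hblock _ hR (by simp [hu.1]) (by simp [Function.update_of_ne huu'.symm, hu'.1])
  obtain ⟨w, huw, hcw⟩ : ∃ w, (deleteVert G v).Adj u w ∧ c w = 7 - i := by
    by_contra! h
    exact hNR (recolorable34_of_forall_adj_ne hc fun w hw => hu.1 ▸ h w hw)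
  have hdeg : degN G u = i + {w | (deleteVert G v).Adj u w ∧ c w = 7 - i}.ncard + 1 := by
    rw [← degN_deleteVert_add_one hvu.symm, degN_eq_ncard_add_ncard hc hi, hu.2]
  have hpos : 0 < {w | (deleteVert G v).Adj u w ∧ c w = 7 - i}.ncard :=
    (Set.ncard_pos (Set.toFinite _)).2 ⟨w, huw, hcw⟩
  refine ⟨u, hvu, hu, hNR, by omega, fun h8 => ?_⟩
  by_contra! hno
  have hnbr : ∀ x, (deleteVert G v).Adj u x → Saturated34 (deleteVert G v) c (7 - i) x →
      ∀ y, G.Adj x y → y = u ∨ ((deleteVert G v).Adj x y ∧ c y = 7 - i) :=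
    fun x hux hx y hxy => adj_eq_or_of_saturated_of_degN_lt (deleteVert_le G v) hx hux.1.symm
      (by rw [hu.1]; omega) (hno x hux hx) hxy
  have hd := isColoring34_recolorSaturatedNbrs hc hu.1 (by omega)
    fun x hux hx y hxy => (hnbr x hux hx y hxy.1).imp_right And.right
  refine hblock _ hd recolorSaturatedNbrs_self
    ((recolorSaturatedNbrs_of_not_saturated huu'.symm fun hS => ?_).trans hu'.1)
  rcases hnbr u' hS.1 hS.2 v hvu'.symm with h | h
  exacts [hvu.ne h, h.1.2.2 rfl]
end

section
/- Let G be a minimally non-(3,4)-colorable graph. Then every vertex of degree 2 in G has two distinct neighbors, one of which has degree at least 5 and the other of which has degree at least 6. -/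
/-!
Let `v` be a 2-vertex with neighbors `a`, `b`, and let `c` be a (3,4)-coloring of `G − va`,
with `i = c v` and `j = 7 - i` the other color. Since `G` is not colorable, `c` cannot extend:
`c a = i` and `a` has `i` neighbors of color `i` besides `v`. Each of the following recolorings of
`G − va` would give `v` and `a` different colors, hence a coloring of `G`: recoloring `v` to `j`
(so `b` is `j`-colored and `j`-saturated), recoloring `a` to `j` (so `a` has a `j`-neighbor), and
recoloring `b` to `i` and then `v` to `j` (so `b` has an `i`-neighbor other than `v`). Counting
gives `deg a ≥ i + 2` and `deg b ≥ j + 2`, i.e. degrees at least 5 and 6 in some order.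
-/

section

variable {V : Type*}

def colorNbrs (G : SimpleGraph V) (c : V → ℕ) (k : ℕ) (x : V) : Set V :=
  {y | G.Adj x y ∧ c y = k}

section ColorNbrs

variable {G : SimpleGraph V} {c : V → ℕ} {k m : ℕ} {u w x : V}

theorem ncard_colorNbrs_add_ncard_colorNbrs_le_degN [Finite V] (hkm : k ≠ m) :
    (colorNbrs G c k x).ncard + (colorNbrs G c m x).ncard ≤ degN G x := by
  rw [← Set.ncard_union_eq (Set.disjoint_left.2 fun y hk hm => hkm (hk.2.symm.trans hm.2))]
  exact Set.ncard_le_ncard (Set.union_subset (fun y hy => hy.1) fun y hy => hy.1)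

theorem colorNbrs_deleteEdges_of_ne_of_ne (hxu : x ≠ u) (hxw : x ≠ w) :
    colorNbrs (G.deleteEdges {s(u, w)}) c k x = colorNbrs G c k x := by
  ext y
  simp only [colorNbrs, Set.mem_ofPred_eq, SimpleGraph.deleteEdges_adj, Set.mem_singleton_iff,
    Sym2.eq_iff]
  constructor
  · exact fun h => ⟨h.1.1, h.2⟩
  · rintro ⟨hxy, hy⟩
    refine ⟨⟨hxy, ?_⟩, hy⟩
    rintro (⟨rfl, -⟩ | ⟨rfl, -⟩) <;> contradiction

theorem colorNbrs_subset_insert_colorNbrs_deleteEdges :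
    colorNbrs G c k u ⊆ insert w (colorNbrs (G.deleteEdges {s(u, w)}) c k u) := by
  rintro y ⟨huy, hy⟩
  rcases eq_or_ne y w with rfl | hyw
  · exact Set.mem_insert _ _
  · refine Set.mem_insert_of_mem _ ⟨⟨huy, ?_⟩, hy⟩
    simp [hyw, (G.ne_of_adj huy).symm]

theorem colorNbrs_subset_colorNbrs_deleteEdges (hw : c w ≠ k) :
    colorNbrs G c k u ⊆ colorNbrs (G.deleteEdges {s(u, w)}) c k u :=
  (Set.subset_insert_iff_of_notMem fun h => hw h.2).1
    colorNbrs_subset_insert_colorNbrs_deleteEdges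

theorem colorNbrs_update_subset_insert [DecidableEq V] :
    colorNbrs G (Function.update c u k) m x ⊆ insert u (colorNbrs G c m x) := by
  rintro y ⟨hxy, hy⟩
  rcases eq_or_ne y u with rfl | hyu
  · exact Set.mem_insert _ _
  · exact Set.mem_insert_of_mem _ ⟨hxy, by rwa [Function.update_of_ne hyu] at hy⟩

end ColorNbrs

section Coloring

variable {G : SimpleGraph V} {c : V → ℕ} {u w : V}

theorem IsColoring34.of_deleteEdges (hc : IsColoring34 (G.deleteEdges {s(u, w)}) c)
    (hu : (colorNbrs G c (c u) u).ncard ≤ c u) (hw : (colorNbrs G c (c w) w).ncard ≤ c w) :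
    IsColoring34 G c := by
  refine ⟨hc.1, fun x => ?_⟩
  rcases eq_or_ne x u with rfl | hxu
  · exact hu
  rcases eq_or_ne x w with rfl | hxw
  · exact hw
  calc (colorNbrs G c (c x) x).ncard
      = (colorNbrs (G.deleteEdges {s(u, w)}) c (c x) x).ncard := by
        rw [colorNbrs_deleteEdges_of_ne_of_ne hxu hxw]
    _ ≤ c x := hc.2 x

theorem IsColoring34.of_deleteEdges_of_ne [Finite V]
    (hc : IsColoring34 (G.deleteEdges {s(u, w)}) c) (huw : c u ≠ c w) : IsColoring34 G c := by
  refine hc.of_deleteEdges ?_ ?_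
  · exact (Set.ncard_le_ncard (colorNbrs_subset_colorNbrs_deleteEdges huw.symm)).trans (hc.2 u)
  · rw [Sym2.eq_swap] at hc
    exact (Set.ncard_le_ncard (colorNbrs_subset_colorNbrs_deleteEdges huw)).trans (hc.2 w)

theorem eq_of_isColoring34_deleteEdges [Finite V] (hG : ¬ Colorable34 G)
    (hc : IsColoring34 (G.deleteEdges {s(u, w)}) c) : c u = c w :=
  by_contra fun huw => hG ⟨c, hc.of_deleteEdges_of_ne huw⟩

theorem recolorable34_of_forall_not_saturated34 [Finite V] [DecidableEq V]
    (hc : IsColoring34 G c) (hu : (colorNbrs G c (7 - c u) u).ncard ≤ 7 - c u)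
    (hsat : ∀ y ∈ colorNbrs G c (7 - c u) u, ¬ Saturated34 G c (7 - c u) y) :
    Recolorable34 G c u := by
  set k := 7 - c u
  have hk : k = 3 ∨ k = 4 := by rcases hc.1 u with h | h <;> omega
  have hle : ∀ x m, u ∉ colorNbrs G (Function.update c u k) m x →
      (colorNbrs G (Function.update c u k) m x).ncard ≤ (colorNbrs G c m x).ncard :=
    fun x m hx => Set.ncard_le_ncard
      ((Set.subset_insert_iff_of_notMem hx).1 colorNbrs_update_subset_insert)
  refine ⟨fun x => ?_, fun x => ?_⟩
  · rcases eq_or_ne x u with rfl | hxu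
    · rwa [Function.update_self]
    · rw [Function.update_of_ne hxu]; exact hc.1 x
  rcases eq_or_ne x u with rfl | hxu
  · rw [Function.update_self]
    exact (hle x k fun h => G.loopless.irrefl x h.1).trans hu
  rw [Function.update_of_ne hxu]
  by_cases hux : u ∈ colorNbrs G (Function.update c u k) (c x) x
  · -- `x` is a `k`-neighbor of `u`, hence not `k`-saturated, so it can afford the extra `u`
    obtain ⟨hxu', hxk⟩ := hux
    rw [Function.update_self] at hxk
    have hlt : (colorNbrs G c k x).ncard < k :=
      lt_of_le_of_ne (hxk ▸ hc.2 x) fun h => hsat x ⟨hxu'.symm, hxk.symm⟩ ⟨hxk.symm, h⟩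
    calc (colorNbrs G (Function.update c u k) (c x) x).ncard
        ≤ (colorNbrs G c (c x) x).ncard + 1 :=
          (Set.ncard_le_ncard colorNbrs_update_subset_insert).trans (Set.ncard_insert_le _ _)
      _ ≤ c x := by rw [← hxk]; omega
  · exact (hle x (c x) hux).trans (hc.2 x)

end Coloring

section DegreeTwo

variable {G : SimpleGraph V} {c : V → ℕ} {v a b : V}

theorem colorNbrs_deleteEdges_subset_singleton (hN : G.neighborSet v = {a, b}) (k : ℕ) :
    colorNbrs (G.deleteEdges {s(v, a)}) c k v ⊆ {b} := by
  rintro y ⟨hvy, -⟩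
  rw [SimpleGraph.deleteEdges_adj] at hvy
  have hy : y ∈ G.neighborSet v := hvy.1
  rw [hN] at hy
  rcases hy with rfl | rfl
  · exact absurd rfl hvy.2
  · rfl

theorem eq_and_ncard_colorNbrs_eq_of_deleteEdges [Finite V] (hG : ¬ Colorable34 G)
    (hv : degN G v ≤ 2) (hc : IsColoring34 (G.deleteEdges {s(v, a)}) c) :
    c a = c v ∧ (colorNbrs G c (c v) a).ncard = c v + 1 := by
  have hv3 : 3 ≤ c v := by rcases hc.1 v with h | h <;> omega
  have hcv : (colorNbrs G c (c v) v).ncard ≤ c v :=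
    ((Set.ncard_le_ncard fun y hy => hy.1).trans hv).trans (by omega)
  have hca := (eq_of_isColoring34_deleteEdges hG hc).symm
  refine ⟨hca, le_antisymm ?_ ?_⟩
  · rw [Sym2.eq_swap] at hc
    calc (colorNbrs G c (c v) a).ncard
        ≤ (insert v (colorNbrs (G.deleteEdges {s(a, v)}) c (c v) a)).ncard :=
          Set.ncard_le_ncard colorNbrs_subset_insert_colorNbrs_deleteEdges
      _ ≤ (colorNbrs (G.deleteEdges {s(a, v)}) c (c a) a).ncard + 1 := by
          rw [hca]; exact Set.ncard_insert_le _ _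
      _ ≤ c v + 1 := by rw [← hca]; exact Nat.add_le_add_right (hc.2 a) 1
  · by_contra! h
    exact hG ⟨c, hc.of_deleteEdges hcv (by rw [hca]; omega)⟩

theorem recolorable34_deleteEdges_of_not_saturated34 [Finite V] [DecidableEq V]
    (hN : G.neighborSet v = {a, b}) (hc : IsColoring34 (G.deleteEdges {s(v, a)}) c)
    (hb : ¬ Saturated34 (G.deleteEdges {s(v, a)}) c (7 - c v) b) :
    Recolorable34 (G.deleteEdges {s(v, a)}) c v := by
  have hsub := colorNbrs_deleteEdges_subset_singleton (c := c) hN (7 - c v)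
  refine recolorable34_of_forall_not_saturated34 hc ?_ fun y hy => ?_
  · have := (Set.ncard_le_ncard hsub).trans (Set.ncard_singleton b).le
    rcases hc.1 v with h | h <;> omega
  · rwa [hsub hy]

theorem saturated34_of_deleteEdges [Finite V] (hG : ¬ Colorable34 G)
    (hN : G.neighborSet v = {a, b}) (hc : IsColoring34 (G.deleteEdges {s(v, a)}) c)
    (hca : c a = c v) :
    Saturated34 (G.deleteEdges {s(v, a)}) c (7 - c v) b := by
  classical
  by_contra hb
  have hav : a ≠ v := (G.ne_of_adj (show a ∈ G.neighborSet v by simp [hN])).symm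
  have h := eq_of_isColoring34_deleteEdges hG
    (recolorable34_deleteEdges_of_not_saturated34 hN hc hb)
  rw [Function.update_self, Function.update_of_ne hav] at h
  rcases hc.1 v with h' | h' <;> omega

theorem exists_adj_eq_of_deleteEdges [Finite V] (hG : ¬ Colorable34 G) (hav : a ≠ v)
    (hc : IsColoring34 (G.deleteEdges {s(v, a)}) c) (hca : c a = c v) :
    ∃ y, G.Adj a y ∧ c y = 7 - c v := by
  classical
  by_contra! h
  have hempty : colorNbrs (G.deleteEdges {s(v, a)}) c (7 - c a) a = ∅ :=
    Set.eq_empty_of_forall_notMem fun y hy => h y hy.1.1 (hca ▸ hy.2)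
  have hrec : Recolorable34 (G.deleteEdges {s(v, a)}) c a :=
    recolorable34_of_forall_not_saturated34 hc (by simp [hempty]) (by simp [hempty])
  have h' := eq_of_isColoring34_deleteEdges hG hrec
  rw [Function.update_self, Function.update_of_ne hav.symm] at h'
  rcases hc.1 v with h'' | h'' <;> omega

theorem exists_adj_ne_eq_of_deleteEdges [Finite V] (hG : ¬ Colorable34 G) (hab : a ≠ b)
    (hN : G.neighborSet v = {a, b}) (hc : IsColoring34 (G.deleteEdges {s(v, a)}) c)
    (hca : c a = c v) :
    ∃ y, G.Adj b y ∧ y ≠ v ∧ c y = c v := by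
  classical
  by_contra! h
  have hav : a ≠ v := (G.ne_of_adj (show a ∈ G.neighborSet v by simp [hN])).symm
  have hbv : b ≠ v := (G.ne_of_adj (show b ∈ G.neighborSet v by simp [hN])).symm
  have hcb : 7 - c b = c v := by
    have := (saturated34_of_deleteEdges hG hN hc hca).1
    rcases hc.1 v with h' | h' <;> omega
  have hsubv := colorNbrs_deleteEdges_subset_singleton (c := c) hN (c v)
  have hsubb : colorNbrs (G.deleteEdges {s(v, a)}) c (c v) b ⊆ {v} :=
    fun y hy => by_contra fun hyv => h y hy.1.1 hyv hy.2
  have hrec : Recolorable34 (G.deleteEdges {s(v, a)}) c b := by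
    refine recolorable34_of_forall_not_saturated34 hc ?_ fun y hy hsat => ?_
    · rw [hcb]
      have := (Set.ncard_le_ncard hsubb).trans (Set.ncard_singleton v).le
      rcases hc.1 v with h' | h' <;> omega
    · rw [hcb] at hy hsat
      obtain rfl : y = v := hsubb hy
      have := (Set.ncard_le_ncard hsubv).trans (Set.ncard_singleton b).le
      have hsat' : (colorNbrs (G.deleteEdges {s(y, a)}) c (c y) y).ncard = c y := hsat.2
      rcases hc.1 y with h' | h' <;> omega
  have hsat := (saturated34_of_deleteEdges hG hN hrec (by
    rw [Function.update_of_ne hab, Function.update_of_ne hbv.symm, hca])).1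
  rw [Function.update_self, Function.update_of_ne hbv.symm, hcb] at hsat
  rcases hc.1 v with h' | h' <;> omega

theorem add_two_le_degN_of_deleteEdges [Finite V] (hG : ¬ Colorable34 G) (hab : a ≠ b)
    (hN : G.neighborSet v = {a, b}) (hc : IsColoring34 (G.deleteEdges {s(v, a)}) c) :
    c v + 2 ≤ degN G a ∧ 9 - c v ≤ degN G b := by
  have hva : G.Adj v a := show a ∈ G.neighborSet v by simp [hN]
  have hvb : G.Adj v b := show b ∈ G.neighborSet v by simp [hN]
  have hdeg : degN G v ≤ 2 := by
    show (G.neighborSet v).ncard ≤ 2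
    rw [hN, Set.ncard_pair hab]
  obtain ⟨hca, hA⟩ := eq_and_ncard_colorNbrs_eq_of_deleteEdges hG hdeg hc
  have hB := saturated34_of_deleteEdges hG hN hc hca
  obtain ⟨y, hay, hy⟩ := exists_adj_eq_of_deleteEdges hG (G.ne_of_adj hva).symm hc hca
  obtain ⟨z, hbz, hzv, hz⟩ := exists_adj_ne_eq_of_deleteEdges hG hab hN hc hca
  have hv := hc.1 v
  constructor
  · have hdegA := ncard_colorNbrs_add_ncard_colorNbrs_le_degN (G := G) (c := c) (x := a)
      (k := c v) (m := 7 - c v) (by omega)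
    have hy' : 0 < (colorNbrs G c (7 - c v) a).ncard := (Set.ncard_pos).2 ⟨y, hay, hy⟩
    omega
  · have hdegB := ncard_colorNbrs_add_ncard_colorNbrs_le_degN (G := G) (c := c) (x := b)
      (k := 7 - c v) (m := c v) (by omega)
    have hB' : (colorNbrs G c (7 - c v) b).ncard = 7 - c v := by
      rw [← colorNbrs_deleteEdges_of_ne_of_ne (G.ne_of_adj hvb).symm hab.symm]
      exact hB.2
    have hzv' : 2 ≤ (colorNbrs G c (c v) b).ncard := by
      rw [← Set.ncard_pair hzv]
      exact Set.ncard_le_ncard (Set.pair_subset ⟨hbz, hz⟩ ⟨hvb.symm, rfl⟩)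
    omega

end DegreeTwo

end

/-- In a minimally non-(3,4)-colorable graph, every 2-vertex has two
distinct neighbors, one of degree at least 5 and the other of degree at least 6. -/
theorem stmt_5 {V : Type*} [Fintype V] (G : SimpleGraph V)
    (hG : MinNonColorable34 G) (v : V) (hv : degN G v = 2) :
    ∃ a b : V, a ≠ b ∧ G.Adj v a ∧ G.Adj v b ∧ 5 ≤ degN G a ∧ 6 ≤ degN G b := by
  obtain ⟨hnc, -, hdel⟩ := hG
  obtain ⟨a, b, hab, hN⟩ : ∃ a b, a ≠ b ∧ G.neighborSet v = {a, b} :=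
    Set.ncard_eq_two.mp hv
  have hva : G.Adj v a := show a ∈ G.neighborSet v by simp [hN]
  have hvb : G.Adj v b := show b ∈ G.neighborSet v by simp [hN]
  obtain ⟨c, hc⟩ := hdel s(v, a) hva
  obtain ⟨hda, hdb⟩ := add_two_le_degN_of_deleteEdges hnc hab hN hc
  rcases hc.1 v with h | h
  · exact ⟨a, b, hab, hva, hvb, by omega, by omega⟩
  · exact ⟨b, a, hab.symm, hvb, hva, by omega, by omega⟩
end

section
/- Let G be a minimally non-(3,4)-colorable graph with girth at least 5, and let C = u_1 u_2 u_3 u_4 u_5 u_6 be a 6-cycle in G such that exactly two of the vertices u_1, ..., u_6 have degree 2. Then at most two of the vertices u_1, ..., u_6 are 5p-vertices. -/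
/-!
A vertex `v` of degree 2 whose neighbors `x`, `z` both have degree at most 5 cannot occur: a
(3,4)-coloring of `G - vx` in which `v` and `x` clash can always be repaired by recoloring `x`
(if it has color 4) or `v`, possibly after first moving `z` from color 4 to color 3. On the
6-cycle every 5p-vertex has a cycle-neighbor of degree 2, since its two cycle-neighbors are
distinct and cannot both be 3⁺-neighbors. With three 5p-vertices and only two 2-vertices,
pigeonhole yields a 2-vertex adjacent to two distinct 5-vertices.
-/

open Function

lemma setOf_adj_deleteEdges {V : Type*} (G : SimpleGraph V) (x y : V) :
    {w | (G.deleteEdges {s(x, y)}).Adj x w} = {w | G.Adj x w} \ {y} := by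
  ext w
  simp only [SimpleGraph.deleteEdges_adj, Set.mem_ofPred_eq, Set.mem_singleton_iff,
    Set.mem_sdiff, Sym2.eq_iff]
  grind [SimpleGraph.Adj.ne]

lemma setOf_adj_deleteEdges_eq_singleton {V : Type*} {G : SimpleGraph V} {v x z : V}
    (hvx : G.Adj v x) (hvz : G.Adj v z) (hxz : x ≠ z) (hv : degN G v = 2) :
    {w | (G.deleteEdges {s(v, x)}).Adj v w} = {z} := by
  have hNv : {w | G.Adj v w} = {x, z} :=
    (Set.eq_of_subset_of_ncard_le (by rintro w (rfl | rfl) <;> assumption)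
      (by rw [Set.ncard_pair hxz]; exact hv.le)
      (Set.finite_of_ncard_ne_zero (by rw [← degN, hv]; norm_num))).symm
  rw [setOf_adj_deleteEdges, hNv]
  ext w
  simp only [Set.mem_sdiff, Set.mem_insert_iff, Set.mem_singleton_iff]
  grind

section Coloring

variable {V : Type*} [Finite V]

lemma two_le_ncard {s : Set V} {a b : V} (hab : a ≠ b) (ha : a ∈ s) (hb : b ∈ s) :
    2 ≤ s.ncard :=
  (Set.one_lt_ncard_iff).2 ⟨a, b, ha, hb, hab⟩

lemma ncard_adj_and_le_degN (H : SimpleGraph V) (v : V) (P : V → Prop) :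
    {w | H.Adj v w ∧ P w}.ncard ≤ degN H v :=
  Set.ncard_le_ncard fun _ hw => hw.1

lemma degN_deleteEdges_le (G : SimpleGraph V) (s : Set (Sym2 V)) (v : V) :
    degN (G.deleteEdges s) v ≤ degN G v :=
  Set.ncard_le_ncard fun _ hw => hw.1

lemma degN_deleteEdges_add_one {G : SimpleGraph V} {x y : V} (hxy : G.Adj x y) :
    degN (G.deleteEdges {s(x, y)}) x + 1 = degN G x := by
  rw [degN, setOf_adj_deleteEdges]
  exact Set.ncard_sdiff_singleton_add_one hxy

lemma IsColoring34.ncard_three_add_ncard_four {H : SimpleGraph V} {c : V → ℕ}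
    (hc : IsColoring34 H c) (v : V) :
    {w | H.Adj v w ∧ c w = 3}.ncard + {w | H.Adj v w ∧ c w = 4}.ncard = degN H v := by
  rw [← Set.ncard_union_eq]
  · congr 1
    ext w
    simp only [Set.mem_union, Set.mem_ofPred_eq, ← and_or_left]
    exact and_iff_left (hc.1 w)
  · exact Set.disjoint_left.2 fun w h3 h4 => by have := h3.2.symm.trans h4.2; omega

lemma IsColoring34.recolor [DecidableEq V] {H : SimpleGraph V} {c : V → ℕ}
    (hc : IsColoring34 H c) {a : V} {j : ℕ} (hj : j = 3 ∨ j = 4)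
    (ha : {w | H.Adj a w ∧ c w = j}.ncard ≤ j)
    (hnbr : ∀ w, H.Adj a w → c w = j → {t | H.Adj w t ∧ c t = j}.ncard < j) :
    IsColoring34 H (update c a j) := by
  refine ⟨fun v => ?_, fun v => ?_⟩
  · rcases eq_or_ne v a with rfl | hv
    · simpa using hj
    · simpa [hv] using hc.1 v
  rcases eq_or_ne v a with rfl | hv
  · simp only [update_self]
    convert ha using 2
    ext w
    simp only [Set.mem_ofPred_eq]
    exact and_congr_right fun hw => by rw [update_of_ne hw.ne']
  rw [update_of_ne hv]
  by_cases hva : H.Adj v a ∧ c v = j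
  · calc {w | H.Adj v w ∧ update c a j w = c v}.ncard
        ≤ (insert a {w | H.Adj v w ∧ c w = c v}).ncard := by
          refine Set.ncard_le_ncard fun w ⟨hw, hcw⟩ => ?_
          rcases eq_or_ne w a with rfl | hwa
          · exact Set.mem_insert _ _
          · exact Set.mem_insert_of_mem _ ⟨hw, by rwa [update_of_ne hwa] at hcw⟩
      _ ≤ {w | H.Adj v w ∧ c w = c v}.ncard + 1 := Set.ncard_insert_le _ _
      _ ≤ c v := by rw [hva.2]; exact hnbr v hva.1.symm hva.2
  · have hsub : {w | H.Adj v w ∧ update c a j w = c v} ⊆ {w | H.Adj v w ∧ c w = c v} := by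
      rintro w ⟨hw, hcw⟩
      rcases eq_or_ne w a with rfl | hwa
      · rw [update_self] at hcw
        exact absurd ⟨hw, hcw.symm⟩ hva
      · exact ⟨hw, by rwa [update_of_ne hwa] at hcw⟩
    exact (Set.ncard_le_ncard hsub).trans (hc.2 v)

lemma IsColoring34.of_deleteEdges_s10 {G : SimpleGraph V} {x y : V} {c : V → ℕ}
    (hc : IsColoring34 (G.deleteEdges {s(x, y)}) c)
    (hx : c x = c y → {w | (G.deleteEdges {s(x, y)}).Adj x w ∧ c w = c x}.ncard < c x)
    (hy : c x = c y → {w | (G.deleteEdges {s(x, y)}).Adj y w ∧ c w = c y}.ncard < c y) :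
    IsColoring34 G c := by
  set H := G.deleteEdges {s(x, y)}
  refine ⟨hc.1, fun v => ?_⟩
  have hsub : {w | G.Adj v w ∧ c w = c v} ⊆
      {w | H.Adj v w ∧ c w = c v} ∪ {w | s(v, w) = s(x, y) ∧ c w = c v} := by
    rintro w ⟨hvw, hw⟩
    by_cases he : s(v, w) = s(x, y)
    · exact Or.inr ⟨he, hw⟩
    · exact Or.inl ⟨SimpleGraph.deleteEdges_adj.2 ⟨hvw, he⟩, hw⟩
  by_cases hv : (v = x ∨ v = y) ∧ c x = c y
  · have hsing : {w | s(v, w) = s(x, y) ∧ c w = c v}.ncard ≤ 1 :=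
      (Set.ncard_le_one_iff (Set.toFinite _)).2 fun h₁ h₂ =>
        Sym2.congr_right.1 (h₁.1.trans h₂.1.symm)
    have hlt : {w | H.Adj v w ∧ c w = c v}.ncard < c v := by
      rcases hv with ⟨rfl | rfl, hxy⟩
      exacts [hx hxy, hy hxy]
    calc _ ≤ _ := Set.ncard_le_ncard hsub
      _ ≤ _ := Set.ncard_union_le _ _
      _ ≤ c v := by omega
  · have hempty : {w | s(v, w) = s(x, y) ∧ c w = c v} = ∅ := by
      refine Set.eq_empty_of_forall_notMem fun w ⟨he, hw⟩ => hv ?_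
      rcases Sym2.eq_iff.1 he with ⟨rfl, rfl⟩ | ⟨rfl, rfl⟩
      exacts [⟨Or.inl rfl, hw.symm⟩, ⟨Or.inr rfl, hw⟩]
    rw [hempty, Set.union_empty] at hsub
    exact (Set.ncard_le_ncard hsub).trans (hc.2 v)

lemma IsColoring34.of_deleteEdges_of_ne_s10 {G : SimpleGraph V} {x y : V} {c : V → ℕ}
    (hc : IsColoring34 (G.deleteEdges {s(x, y)}) c) (hxy : c x ≠ c y) : IsColoring34 G c :=
  hc.of_deleteEdges_s10 (fun h => absurd h hxy) (fun h => absurd h hxy)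

lemma IsColoring34.recolor_three_of_saturated [DecidableEq V] {H : SimpleGraph V} {c : V → ℕ}
    (hc : IsColoring34 H c) {x : V} (hdeg : degN H x ≤ 4)
    (hsat : {w | H.Adj x w ∧ c w = 4}.ncard = 4) : IsColoring34 H (update c x 3) := by
  have hnone : {w | H.Adj x w ∧ c w = 3} = ∅ := by
    have := hc.ncard_three_add_ncard_four x
    exact (Set.ncard_eq_zero).1 (by omega)
  refine hc.recolor (Or.inl rfl) (by simp [hnone]) fun w hw hcw => ?_
  exact absurd hnone (Set.nonempty_iff_ne_empty.1 ⟨w, hw, hcw⟩)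

lemma IsColoring34.exists_recolor_four_of_forall_adj_eq [DecidableEq V] {H : SimpleGraph V}
    {c : V → ℕ} (hc : IsColoring34 H c) {v z : V} (hvz : H.Adj v z)
    (hv : ∀ w, H.Adj v w → w = z) (hv3 : c v = 3) (hz : degN H z ≤ 5) :
    ∃ c', IsColoring34 H c' ∧ c' v = 4 ∧ ∀ w, w ≠ v → w ≠ z → c' w = c w := by
  have hsmall : ∀ (d : V → ℕ) (j : ℕ), {w | H.Adj v w ∧ d w = j}.ncard ≤ 1 := fun d j =>
    (Set.ncard_le_one_iff (Set.toFinite _)).2 fun h₁ h₂ => (hv _ h₁.1).trans (hv _ h₂.1).symm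
  by_cases hzsat : c z = 4 ∧ {t | H.Adj z t ∧ c t = 4}.ncard = 4
  · have hz3 : {t | H.Adj z t ∧ c t = 3}.ncard ≤ 1 := by
      have := hc.ncard_three_add_ncard_four z
      omega
    have hc₁ : IsColoring34 H (update c z 3) := by
      refine hc.recolor (Or.inl rfl) (hz3.trans (by norm_num)) fun w hw hcw => ?_
      obtain rfl : w = v :=
        (Set.ncard_le_one_iff (Set.toFinite _)).1 hz3 ⟨hw, hcw⟩ ⟨hvz.symm, hv3⟩
      exact (hsmall c 3).trans_lt (by norm_num)
    refine ⟨update (update c z 3) v 4, ?_, update_self .., fun w hwv hwz => ?_⟩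
    · refine hc₁.recolor (Or.inr rfl) ((hsmall _ 4).trans (by norm_num)) fun w hw hcw => ?_
      rw [hv w hw, update_self] at hcw
      exact absurd hcw (by norm_num)
    · rw [update_of_ne hwv, update_of_ne hwz]
  · refine ⟨update c v 4, ?_, update_self .., fun w hwv _ => update_of_ne hwv ..⟩
    refine hc.recolor (Or.inr rfl) ((hsmall c 4).trans (by norm_num)) fun w hw hcw => ?_
    obtain rfl := hv w hw
    have := hc.2 w
    rw [hcw] at this
    exact lt_of_le_of_ne this fun h => hzsat ⟨hcw, h⟩

theorem MinNonColorable34.five_lt_degN_of_degN_eq_two {G : SimpleGraph V}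
    (hG : MinNonColorable34 G) {v x z : V} (hvx : G.Adj v x) (hvz : G.Adj v z) (hxz : x ≠ z)
    (hv : degN G v = 2) (hx : degN G x ≤ 5) : 5 < degN G z := by
  classical
  by_contra! hz
  set H := G.deleteEdges {s(v, x)}
  obtain ⟨c, hc⟩ := hG.2.2 s(v, x) hvx
  have hHv : {w | H.Adj v w} = {z} := setOf_adj_deleteEdges_eq_singleton hvx hvz hxz hv
  have hHvz : H.Adj v z := (Set.ext_iff.1 hHv z).2 rfl
  have hHv_eq : ∀ w, H.Adj v w → w = z := fun w hw => (Set.ext_iff.1 hHv w).1 hw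
  have hHx : degN H x ≤ 4 := by
    have := degN_deleteEdges_add_one hvx.symm
    rw [Sym2.eq_swap] at this
    change degN H x + 1 = degN G x at this
    omega
  have hHz : degN H z ≤ 5 := (degN_deleteEdges_le G _ z).trans hz
  have hcv : 3 ≤ c v := by rcases hc.1 v with h | h <;> omega
  have hHv_small : {w | H.Adj v w ∧ c w = c v}.ncard < c v := by
    have := ncard_adj_and_le_degN H v (fun w => c w = c v)
    rw [degN, hHv, Set.ncard_singleton] at this
    omega
  obtain ⟨hcvx, hsat⟩ : c v = c x ∧ {w | H.Adj x w ∧ c w = c x}.ncard = c x := by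
    by_contra! hclash
    refine hG.1 ⟨c, hc.of_deleteEdges_s10 (fun _ => hHv_small) fun h => ?_⟩
    exact lt_of_le_of_ne (hc.2 x) (hclash h)
  rcases hc.1 x with hx3 | hx4
  · obtain ⟨c', hc', hc'v, hc'eq⟩ :=
      hc.exists_recolor_four_of_forall_adj_eq hHvz hHv_eq (hcvx.trans hx3) hHz
    refine hG.1 ⟨c', hc'.of_deleteEdges_of_ne_s10 ?_⟩
    rw [hc'v, hc'eq x hvx.ne' hxz, hx3]
    norm_num
  · refine hG.1 ⟨_, (hc.recolor_three_of_saturated hHx (hx4 ▸ hsat)).of_deleteEdges_of_ne_s10 ?_⟩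
    rw [update_self, update_of_ne hvx.ne, hcvx, hx4]
    norm_num

end Coloring

lemma Is5p.exists_adj_degN_eq_two {V : Type*} [Finite V] {G : SimpleGraph V} {S : Set V}
    (hS : ∀ x ∈ S, ∃ a ∈ S, ∃ b ∈ S, a ≠ b ∧ G.Adj x a ∧ G.Adj x b) {q : V} (hqS : q ∈ S)
    (hq : Is5p G q) : ∃ b ∈ {x ∈ S | degN G x = 2}, G.Adj q b := by
  obtain ⟨a, haS, b, hbS, hab, hqa, hqb⟩ := hS q hqS
  have two_le : ∀ y ∈ S, 2 ≤ degN G y := fun y hy => by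
    obtain ⟨a, -, b, -, hab, hya, hyb⟩ := hS y hy
    exact two_le_ncard hab hya hyb
  by_contra! h
  have ha := lt_of_le_of_ne (two_le a haS) fun e => h a ⟨haS, e.symm⟩ hqa
  have hb := lt_of_le_of_ne (two_le b hbS) fun e => h b ⟨hbS, e.symm⟩ hqb
  have := two_le_ncard (s := {w | G.Adj q w ∧ 3 ≤ degN G w}) hab ⟨hqa, ha⟩ ⟨hqb, hb⟩
  exact absurd hq.2 (by unfold tpn; omega)

theorem stmt_10_general {V : Type*} [Fintype V] (G : SimpleGraph V)
    (hG : MinNonColorable34 G)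
    (u1 u2 u3 u4 u5 u6 : V)
    (hnd : ([u1, u2, u3, u4, u5, u6] : List V).Nodup)
    (a12 : G.Adj u1 u2) (a23 : G.Adj u2 u3) (a34 : G.Adj u3 u4)
    (a45 : G.Adj u4 u5) (a56 : G.Adj u5 u6) (a61 : G.Adj u6 u1)
    (h2 : {x ∈ ({u1, u2, u3, u4, u5, u6} : Set V) | degN G x = 2}.ncard = 2) :
    {x ∈ ({u1, u2, u3, u4, u5, u6} : Set V) | Is5p G x}.ncard ≤ 2 := by
  set S : Set V := {u1, u2, u3, u4, u5, u6}
  have hcycle : ∀ x ∈ S, ∃ a ∈ S, ∃ b ∈ S, a ≠ b ∧ G.Adj x a ∧ G.Adj x b := by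
    simp only [List.nodup_cons, List.mem_cons, List.not_mem_nil, or_false,
      not_or, List.nodup_nil, and_true] at hnd
    obtain ⟨⟨-, h13, -, h15, -⟩, ⟨-, h24, -, h26⟩, ⟨-, h35, -⟩, ⟨-, h46⟩, -⟩ := hnd
    rintro x (rfl | rfl | rfl | rfl | rfl | rfl)
    · exact ⟨u6, by simp [S], u2, by simp [S], Ne.symm h26, a61.symm, a12⟩
    · exact ⟨u1, by simp [S], u3, by simp [S], h13, a12.symm, a23⟩
    · exact ⟨u2, by simp [S], u4, by simp [S], h24, a23.symm, a34⟩
    · exact ⟨u3, by simp [S], u5, by simp [S], h35, a34.symm, a45⟩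
    · exact ⟨u4, by simp [S], u6, by simp [S], h46, a45.symm, a56⟩
    · exact ⟨u5, by simp [S], u1, by simp [S], Ne.symm h15, a56.symm, a61⟩
  by_contra! hmany
  choose! f hfB hfadj using fun q (hq : q ∈ {x ∈ S | Is5p G x}) =>
    hq.2.exists_adj_degN_eq_two hcycle hq.1
  obtain ⟨q, hq, q', hq', hne, hfq⟩ :=
    Set.exists_ne_map_eq_of_ncard_lt_of_maps_to (by rwa [h2]) hfB
  have hdeg := hG.five_lt_degN_of_degN_eq_two (hfadj q hq).symm
    (hfq ▸ (hfadj q' hq').symm) hne (hfB q hq).2 hq.2.1.le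
  exact hdeg.ne' hq'.2.1

/-- In a minimally non-(3,4)-colorable graph of girth at least 5, if
exactly two vertices of a 6-cycle have degree 2, then at most two of its vertices
are 5p-vertices. -/
theorem stmt_10 {V : Type*} [Fintype V] (G : SimpleGraph V)
    (hG : MinNonColorable34 G) (hgirth : GirthAtLeast5 G)
    (u1 u2 u3 u4 u5 u6 : V)
    (hnd : ([u1, u2, u3, u4, u5, u6] : List V).Nodup)
    (a12 : G.Adj u1 u2) (a23 : G.Adj u2 u3) (a34 : G.Adj u3 u4)
    (a45 : G.Adj u4 u5) (a56 : G.Adj u5 u6) (a61 : G.Adj u6 u1)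
    (h2 : {x ∈ ({u1, u2, u3, u4, u5, u6} : Set V) | degN G x = 2}.ncard = 2) :
    {x ∈ ({u1, u2, u3, u4, u5, u6} : Set V) | Is5p G x}.ncard ≤ 2 :=
  stmt_10_general G hG u1 u2 u3 u4 u5 u6 hnd a12 a23 a34 a45 a56 a61 h2
end
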